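/- arXiv:1611.06259 — 3 statements merged into one kernel-verified Lean document; each statement's English description precedes it below -/
import Mathlib

section
/- For every colored permutation w in Z_α ≀ S_n with last color 0, flag(w) + flag(r(w)) = α·(n−1), where r(w_1^{c_1}⋯w_n^{c_n}) = w_n^{c_n−c_1} ⋯ w_1^{0}. -/
open Finset Polynomial

/-- The `i`-th position (0-indexed) among the first `n-1` positions, as an element of `Fin n`. -/
def lo (n : ℕ) (i : Fin (n - 1)) : Fin n := ⟨i.val, by have := i.isLt; omega⟩

/-- The `(i+1)`-st position, as an element of `Fin n`. -/
def hi (n : ℕ) (i : Fin (n - 1)) : Fin n := ⟨i.val + 1, by have := i.isLt; omega⟩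

/-- The colored descent number `d(w)` of a colored permutation, given by the underlying
permutation `w` and the color vector `c`. -/
def cdes {n α : ℕ} (w : Equiv.Perm (Fin n)) (c : Fin n → ZMod α) : ℕ :=
  (univ.filter (fun i : Fin (n - 1) =>
    c (lo n i) ≠ c (hi n i) ∨ (c (lo n i) = c (hi n i) ∧ w (hi n i) < w (lo n i)))).card

/-- The flag descent statistic of a colored permutation. -/
def flagStat {n α : ℕ} (w : Equiv.Perm (Fin n)) (c : Fin n → ZMod α) : ℕ :=
  α * (univ.filter (fun i : Fin (n - 1) =>
        c (lo n i) = c (hi n i) ∧ w (hi n i) < w (lo n i))).card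
  + α * (univ.filter (fun i : Fin (n - 1) =>
        (c (lo n i)).val < (c (hi n i)).val)).card
  + (if h : 0 < n then (c ⟨0, h⟩).val else 0)

/-- The classical descent number of a permutation. -/
def des {n : ℕ} (w : Equiv.Perm (Fin n)) : ℕ :=
  (univ.filter (fun i : Fin (n - 1) => w (hi n i) < w (lo n i))).card

/-- The reversal of the underlying permutation (in one-line notation). -/
def rPerm {n : ℕ} (w : Equiv.Perm (Fin n)) : Equiv.Perm (Fin n) :=
  (Fin.revPerm : Equiv.Perm (Fin n)).trans w

/-- The reversed color vector with `c 0` subtracted from every color. -/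
def rCol {n α : ℕ} (c : Fin n → ZMod α) : Fin n → ZMod α :=
  fun i => c i.rev - (if h : 0 < n then c ⟨0, h⟩ else 0)

/-! Since `(x - y).val = x.val - y.val + α·[x.val < y.val]`, the colour-ascent term of `flag`
telescopes: `flag(w) = α·(same-colour descents) + ∑ᵢ (cᵢ - cᵢ₊₁).val + cₙ.val`.
Under `r` each difference `cᵢ - cᵢ₊₁` is replaced by its negative (the shift by `c₁` cancels),
the last colour becomes `0`, and same-colour descents become same-colour ascents.
As `x.val + (-x).val = α·[x ≠ 0]`, every adjacent pair then contributes exactly `α`. -/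

theorem sum_lo_add_last {M : Type*} [AddCommMonoid M] {n : ℕ} (hn : 0 < n) (f : Fin n → M) :
    ∑ i, f (lo n i) + f ⟨n - 1, by omega⟩ = ∑ i, f i := by
  obtain ⟨m, rfl⟩ : ∃ m, n = m + 1 := ⟨n - 1, by omega⟩
  exact (Fin.sum_univ_castSucc f).symm

theorem first_add_sum_hi {M : Type*} [AddCommMonoid M] {n : ℕ} (hn : 0 < n) (f : Fin n → M) :
    f ⟨0, hn⟩ + ∑ i, f (hi n i) = ∑ i, f i := by
  obtain ⟨m, rfl⟩ : ∃ m, n = m + 1 := ⟨n - 1, by omega⟩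
  exact (Fin.sum_univ_succ f).symm

theorem rev_lo_rev {n : ℕ} (i : Fin (n - 1)) : (lo n i.rev).rev = hi n i := by
  ext; simp only [lo, hi, Fin.val_rev]; omega

theorem rev_hi_rev {n : ℕ} (i : Fin (n - 1)) : (hi n i.rev).rev = lo n i := by
  ext; simp only [lo, hi, Fin.val_rev]; omega

theorem card_filter_rev {m : ℕ} (p : Fin m → Prop) [DecidablePred p] :
    #{i | p (Fin.rev i)} = #{i | p i} := by
  rw [card_filter, card_filter]
  exact Fintype.sum_equiv Fin.revPerm _ _ (fun _ => rfl)

theorem ZMod.val_sub_add_val {α : ℕ} [NeZero α] (x y : ZMod α) :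
    (x - y).val + y.val = x.val + if x.val < y.val then α else 0 := by
  split_ifs with h
  · have hle : α ≤ (x - y).val + y.val := by
      by_contra! hlt
      have := ZMod.val_add_of_lt hlt
      rw [sub_add_cancel] at this
      omega
    rw [ZMod.val_add_val_of_le hle, sub_add_cancel]
  · rw [ZMod.val_sub (not_lt.mp h), Nat.sub_add_cancel (not_lt.mp h), add_zero]

theorem ZMod.val_sub_add_val_sub {α : ℕ} [NeZero α] (x y : ZMod α) :
    (x - y).val + (y - x).val = if x = y then 0 else α := by
  rw [← neg_sub x y, ZMod.neg_val]
  by_cases h : x = y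
  · simp [h]
  · have := ZMod.val_lt (x - y)
    simp only [sub_eq_zero, h, if_false]
    omega

section ColoredPermutation

variable {n α : ℕ}

def sameColorDes (w : Equiv.Perm (Fin n)) (c : Fin n → ZMod α) : ℕ :=
  #{i | c (lo n i) = c (hi n i) ∧ w (hi n i) < w (lo n i)}

def colorAsc (c : Fin n → ZMod α) : ℕ :=
  #{i | (c (lo n i)).val < (c (hi n i)).val}

theorem flagStat_eq (hn : 0 < n) (w : Equiv.Perm (Fin n)) (c : Fin n → ZMod α) :
    flagStat w c = α * sameColorDes w c + α * colorAsc c + (c ⟨0, hn⟩).val := by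
  rw [flagStat, dif_pos hn]
  rfl

theorem mul_colorAsc_add_val_first [NeZero α] (hn : 0 < n) (c : Fin n → ZMod α) :
    α * colorAsc c + (c ⟨0, hn⟩).val
      = ∑ i, (c (lo n i) - c (hi n i)).val + (c ⟨n - 1, by omega⟩).val := by
  have hpair : α * colorAsc c + ∑ i, (c (lo n i)).val
      = ∑ i, (c (lo n i) - c (hi n i)).val + ∑ i, (c (hi n i)).val := by
    rw [colorAsc, card_filter, mul_sum, ← sum_add_distrib, ← sum_add_distrib]
    refine sum_congr rfl fun i _ => ?_
    rw [ZMod.val_sub_add_val]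
    split_ifs <;> omega
  have hlo := sum_lo_add_last hn fun k => (c k).val
  have hhi := first_add_sum_hi hn fun k => (c k).val
  omega

theorem flagStat_eq_sum [NeZero α] (hn : 0 < n) (w : Equiv.Perm (Fin n)) (c : Fin n → ZMod α) :
    flagStat w c = α * sameColorDes w c + ∑ i, (c (lo n i) - c (hi n i)).val
      + (c ⟨n - 1, by omega⟩).val := by
  rw [flagStat_eq hn, add_assoc, mul_colorAsc_add_val_first hn, add_assoc]

theorem rPerm_lo_rev (w : Equiv.Perm (Fin n)) (i : Fin (n - 1)) :
    rPerm w (lo n i.rev) = w (hi n i) := by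
  rw [rPerm, Equiv.trans_apply, Fin.revPerm_apply, rev_lo_rev]

theorem rPerm_hi_rev (w : Equiv.Perm (Fin n)) (i : Fin (n - 1)) :
    rPerm w (hi n i.rev) = w (lo n i) := by
  rw [rPerm, Equiv.trans_apply, Fin.revPerm_apply, rev_hi_rev]

theorem rCol_apply (hn : 0 < n) (c : Fin n → ZMod α) (i : Fin n) :
    rCol c i = c i.rev - c ⟨0, hn⟩ := by
  rw [rCol, dif_pos hn]

theorem rCol_last (hn : 0 < n) (c : Fin n → ZMod α) : rCol c ⟨n - 1, by omega⟩ = 0 := by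
  rw [rCol_apply hn, sub_eq_zero]
  congr 1
  ext
  simp only [Fin.val_rev]
  omega

theorem sameColorDes_rev (hn : 0 < n) (w : Equiv.Perm (Fin n)) (c : Fin n → ZMod α) :
    sameColorDes (rPerm w) (rCol c)
      = #{i | c (lo n i) = c (hi n i) ∧ w (lo n i) < w (hi n i)} := by
  rw [sameColorDes, ← card_filter_rev]
  simp only [rPerm_lo_rev, rPerm_hi_rev, rCol_apply hn, rev_lo_rev, rev_hi_rev, sub_left_inj,
    eq_comm]

theorem sum_val_sub_rCol (hn : 0 < n) (c : Fin n → ZMod α) :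
    ∑ i, (rCol c (lo n i) - rCol c (hi n i)).val = ∑ i, (c (hi n i) - c (lo n i)).val := by
  rw [← Fintype.sum_equiv Fin.revPerm _ _ (fun _ => rfl)]
  simp only [Fin.revPerm_apply, rCol_apply hn, rev_lo_rev, rev_hi_rev, sub_sub_sub_cancel_right]

theorem sameColorDes_add_sameColorDes_rev (hn : 0 < n) (w : Equiv.Perm (Fin n))
    (c : Fin n → ZMod α) :
    sameColorDes w c + sameColorDes (rPerm w) (rCol c) = #{i | c (lo n i) = c (hi n i)} := by
  have hasc : ∀ i, w (lo n i) < w (hi n i) ↔ ¬ w (hi n i) < w (lo n i) := fun i => by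
    have hne : w (lo n i) ≠ w (hi n i) :=
      w.injective.ne (Fin.ne_of_val_ne (by simp only [lo, hi]; omega))
    rw [not_lt, hne.le_iff_lt]
  rw [sameColorDes, sameColorDes_rev hn]
  simp only [hasc]
  rw [← filter_filter, ← filter_filter, card_filter_add_card_filter_not]

theorem sum_val_sub_add_sum_val_sub [NeZero α] (c : Fin n → ZMod α) :
    ∑ i, (c (lo n i) - c (hi n i)).val + ∑ i, (c (hi n i) - c (lo n i)).val
      = α * #{i | c (lo n i) ≠ c (hi n i)} := by
  rw [← sum_add_distrib, card_filter, mul_sum]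
  refine sum_congr rfl fun i _ => ?_
  rw [ZMod.val_sub_add_val_sub]
  split_ifs <;> simp_all

end ColoredPermutation

/-- For every colored permutation with last color `0`,
`flag(w) + flag(r(w)) = α⬝(n-1)`. -/
theorem flag_add_flag_r_eq (n α : ℕ) (hn : 0 < n) (hα : 0 < α)
    (w : Equiv.Perm (Fin n)) (c : Fin n → ZMod α) (hlast : c ⟨n - 1, by omega⟩ = 0) :
    flagStat w c + flagStat (rPerm w) (rCol c) = α * (n - 1) := by
  have : NeZero α := NeZero.of_pos hα
  rw [flagStat_eq_sum hn, flagStat_eq_sum hn, rCol_last hn, hlast, sum_val_sub_rCol hn]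
  calc _ = α * (sameColorDes w c + sameColorDes (rPerm w) (rCol c))
        + (∑ i, (c (lo n i) - c (hi n i)).val + ∑ i, (c (hi n i) - c (lo n i)).val) := by
        rw [ZMod.val_zero]; ring
    _ = α * (#{i | c (lo n i) = c (hi n i)} + #{i | c (lo n i) ≠ c (hi n i)}) := by
        rw [sameColorDes_add_sameColorDes_rev hn, sum_val_sub_add_sum_val_sub, mul_add]
    _ = α * (n - 1) := by
        rw [card_filter_add_card_filter_not, card_univ, Fintype.card_fin]
end

section
/- Let (c_1,…,c_n) be a sequence in Z_α with c_n = 0, c_1 ≠ 0, and c_i ≠ c_{i+1} for all i ∈ {1,…,n−1}. Then |{ i : c_i < c_{i+1} }| + |{ i : c_{i+1} − c_1 < c_i − c_1 }| = n − 2, where comparisons use the linear order 0 < 1 < ⋯ < α−1 on Z_α and subtraction is in Z_α. -/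
open Finset Polynomial

/-
Compare every colour with `c₁`: for adjacent colours `x ≠ y`, subtracting `c₁` preserves their
order unless exactly one of them is `≥ c₁`, in which case it reverses it. Hence each position
contributes exactly `1 + [c₁ ≤ y] - [c₁ ≤ x]` to the left-hand side, and the sum telescopes to
`(n - 1) + [c₁ ≤ cₙ] - [c₁ ≤ c₁] = n - 2`, since `cₙ = 0 < c₁`.
-/

theorem ZMod.val_sub_of_lt {n : ℕ} [NeZero n] {a b : ZMod n} (h : a.val < b.val) :
    (a - b).val = a.val + n - b.val := by
  have hb := b.val_lt
  have : a - b = ((a.val + n - b.val : ℕ) : ZMod n) := by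
    push_cast [Nat.cast_sub (by omega : b.val ≤ a.val + n)]
    simp
  rw [this, ZMod.val_natCast, Nat.mod_eq_of_lt (by omega)]

theorem ZMod.val_sub_eq_ite {n : ℕ} [NeZero n] (a b : ZMod n) :
    (a - b).val = if b.val ≤ a.val then a.val - b.val else a.val + n - b.val := by
  split_ifs with h
  · exact ZMod.val_sub h
  · exact ZMod.val_sub_of_lt (not_le.mp h)

theorem ite_val_lt_add_ite_val_sub_lt {α : ℕ} [NeZero α] {x y : ZMod α} (hxy : x ≠ y)
    (t : ZMod α) :
    (if x.val < y.val then (1 : ℤ) else 0) + (if (y - t).val < (x - t).val then 1 else 0) =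
      1 + (if t.val ≤ y.val then 1 else 0) - (if t.val ≤ x.val then 1 else 0) := by
  have hne : x.val ≠ y.val := fun h => hxy (ZMod.val_injective α h)
  have := x.val_lt
  have := y.val_lt
  have := t.val_lt
  rw [ZMod.val_sub_eq_ite, ZMod.val_sub_eq_ite]
  split_ifs <;> omega

theorem sum_hi_sub_lo {M : Type*} [AddCommGroup M] {n : ℕ} (hn : 0 < n) (f : Fin n → M) :
    ∑ i : Fin (n - 1), (f (hi n i) - f (lo n i)) = f ⟨n - 1, by omega⟩ - f ⟨0, hn⟩ := by
  let F : ℕ → M := fun k => if h : k < n then f ⟨k, h⟩ else 0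
  have hF : ∀ i : Fin (n - 1), f (hi n i) - f (lo n i) = F (i + 1) - F i := fun i => by
    simp only [F, dif_pos (by omega : (i : ℕ) + 1 < n), dif_pos (by omega : (i : ℕ) < n)]
    rfl
  rw [Finset.sum_congr rfl fun i _ => hF i, Fin.sum_univ_eq_sum_range (fun k => F (k + 1) - F k),
    Finset.sum_range_sub]
  simp only [F, dif_pos (by omega : n - 1 < n), dif_pos hn]

/-- For a color sequence in `Z_α` with `c_n = 0`, `c_1 ≠ 0`, and no two adjacent colors
equal, `|{i : c_i < c_{i+1}}| + |{i : c_{i+1} - c_1 < c_i - c_1}| = n - 2`. -/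
theorem ascents_add_shifted_descents_eq (n α : ℕ) (hn : 2 ≤ n) (hα : 2 ≤ α)
    (c : Fin n → ZMod α) (hlast : c ⟨n - 1, by omega⟩ = 0)
    (hfirst : c ⟨0, by omega⟩ ≠ 0)
    (hadj : ∀ i : Fin (n - 1), c (lo n i) ≠ c (hi n i)) :
    (univ.filter (fun i : Fin (n - 1) =>
        (c (lo n i)).val < (c (hi n i)).val)).card
      + (univ.filter (fun i : Fin (n - 1) =>
        (c (hi n i) - c ⟨0, by omega⟩).val < (c (lo n i) - c ⟨0, by omega⟩).val)).card
      = n - 2 := by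
  have : NeZero α := ⟨by omega⟩
  set t := c ⟨0, by omega⟩
  let g : Fin n → ℤ := fun j => if t.val ≤ (c j).val then 1 else 0
  have hg_first : g ⟨0, by omega⟩ = 1 := if_pos le_rfl
  have hg_last : g ⟨n - 1, by omega⟩ = 0 := by
    have : t.val ≠ 0 := fun h => hfirst ((ZMod.val_eq_zero t).mp h)
    simp only [g, hlast, ZMod.val_zero]
    exact if_neg (by omega)
  have hsum : ((univ.filter fun i : Fin (n - 1) => (c (lo n i)).val < (c (hi n i)).val).card
        + (univ.filter fun i : Fin (n - 1) => (c (hi n i) - t).val < (c (lo n i) - t).val).card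
        : ℤ) = ∑ i : Fin (n - 1), (1 + (g (hi n i) - g (lo n i))) := by
    simp only [Finset.natCast_card_filter, ← Finset.sum_add_distrib]
    refine Finset.sum_congr rfl fun i _ => ?_
    rw [ite_val_lt_add_ite_val_sub_lt (hadj i)]
    ring
  rw [Finset.sum_add_distrib, sum_hi_sub_lo (by omega), hg_first, hg_last] at hsum
  simp only [Finset.sum_const, Finset.card_univ, Fintype.card_fin, nsmul_eq_mul, mul_one] at hsum
  omega
end

section
/- For n = 2k+1 odd, the flag descent polynomial over the quotient satisfies F_{2k+1}^2(x) = (1+x)^{2k} · A_{2k+1}(x), where F_n^2(x) = Σ x^{flag(w)} over signed permutations w ∈ Z_2 ≀ S_n with last color 0, and A_n(x) is the classical Eulerian polynomial. (Verify this for k = 1: F_3^2(x) = (1+x)^2 (1 + 4x + x^2).) -/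
open Finset Polynomial

variable {m : ℕ}

lemma des_eq_card (w : Equiv.Perm (Fin (m + 1))) :
    des w = #{i : Fin m | w i.succ < w i.castSucc} := rfl

lemma Fin.sum_univ_succ_sub_castSucc {G : Type*} [AddCommGroup G] (f : Fin (m + 1) → G) :
    ∑ i : Fin m, (f i.succ - f i.castSucc) = f (Fin.last m) - f 0 := by
  cases m with
  | zero => simp
  | succ m =>
    simpa [← Fin.top_eq_last, Finset.Iic_top] using Fin.sum_Iic_sub (⊤ : Fin (m + 1)) f

section SuffixSum

variable {G : Type*} [AddCommGroup G]

def suffixSum (b : Fin m → G) (j : Fin (m + 1)) : G :=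
  ∑ t with j ≤ t.castSucc, b t

def consecutiveDiff (c : Fin (m + 1) → G) (i : Fin m) : G :=
  c i.castSucc - c i.succ

lemma suffixSum_last (b : Fin m → G) : suffixSum b (Fin.last m) = 0 :=
  sum_eq_zero fun t ht => absurd (mem_filter.1 ht).2 (not_le.2 t.castSucc_lt_last)

lemma suffixSum_castSucc (b : Fin m → G) (i : Fin m) :
    suffixSum b i.castSucc = b i + suffixSum b i.succ := by
  have : (univ.filter fun t : Fin m => i.castSucc ≤ t.castSucc)
      = insert i (univ.filter fun t => i.succ ≤ t.castSucc) := by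
    ext t
    simp only [mem_filter, mem_univ, true_and, mem_insert, Fin.castSucc_le_castSucc_iff,
      Fin.succ_le_castSucc_iff]
    omega
  rw [suffixSum, this, sum_insert (by simp), suffixSum]

lemma consecutiveDiff_suffixSum (b : Fin m → G) : consecutiveDiff (suffixSum b) = b :=
  funext fun i => by rw [consecutiveDiff, suffixSum_castSucc, add_sub_cancel_right]

lemma suffixSum_consecutiveDiff {c : Fin (m + 1) → G} (hc : c (Fin.last m) = 0) :
    suffixSum (consecutiveDiff c) = c :=
  funext fun j => Fin.reverseInduction (by rw [suffixSum_last, hc])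
    (fun i ih => by rw [suffixSum_castSucc, ih, consecutiveDiff, sub_add_cancel]) j

lemma sum_last_eq_zero_eq_sum_suffixSum {M : Type*} [AddCommMonoid M] [Fintype G] [DecidableEq G]
    (F : (Fin (m + 1) → G) → M) :
    ∑ c with c (Fin.last m) = 0, F c = ∑ b : Fin m → G, F (suffixSum b) :=
  sum_nbij' consecutiveDiff suffixSum (by simp) (fun b _ => by simp [suffixSum_last])
    (fun c hc => suffixSum_consecutiveDiff (mem_filter.1 hc).2)
    (fun b _ => consecutiveDiff_suffixSum b)
    (fun c hc => by rw [suffixSum_consecutiveDiff (mem_filter.1 hc).2])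

end SuffixSum

lemma ZMod.sum_univ_two {M : Type*} [AddCommMonoid M] (f : ZMod 2 → M) :
    ∑ v, f v = f 0 + f 1 :=
  Fin.sum_univ_two f

lemma two_mul_card_ascents_add_val_eq_card_changes (c : Fin (m + 1) → ZMod 2)
    (hc : c (Fin.last m) = 0) :
    2 * #{i : Fin m | (c i.castSucc).val < (c i.succ).val} + (c 0).val
      = #{i : Fin m | c i.castSucc ≠ c i.succ} := by
  have step : ∀ u v : ZMod 2, (2 * (if u.val < v.val then 1 else 0) : ℤ)
      = (v.val - u.val : ℤ) + if u ≠ v then 1 else 0 := by decide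
  have tele := Fin.sum_univ_succ_sub_castSucc (fun j => ((c j).val : ℤ))
  rw [hc, ZMod.val_zero, Nat.cast_zero, zero_sub] at tele
  have hZ : (2 * #{i : Fin m | (c i.castSucc).val < (c i.succ).val} + (c 0).val : ℤ)
      = #{i : Fin m | c i.castSucc ≠ c i.succ} := by
    simp only [card_filter, Nat.cast_sum, Nat.cast_ite, Nat.cast_one, Nat.cast_zero, mul_sum, step,
      sum_add_distrib, tele]
    ring
  exact_mod_cast hZ

lemma flagStat_eq_sum_s15 (w : Equiv.Perm (Fin (m + 1))) {c : Fin (m + 1) → ZMod 2}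
    (hc : c (Fin.last m) = 0) :
    flagStat w c = ∑ i : Fin m,
      if c i.castSucc = c i.succ then (if w i.succ < w i.castSucc then 2 else 0) else 1 := by
  have h : flagStat w c = 2 * #{i : Fin m | c i.castSucc = c i.succ ∧ w i.succ < w i.castSucc}
      + (2 * #{i : Fin m | (c i.castSucc).val < (c i.succ).val} + (c 0).val) := by
    rw [flagStat, dif_pos m.succ_pos, add_assoc]; rfl
  rw [h, two_mul_card_ascents_add_val_eq_card_changes c hc, card_filter, card_filter, mul_sum,
    ← sum_add_distrib]
  refine sum_congr rfl fun i _ => ?_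
  split_ifs <;> simp_all

lemma flagStat_suffixSum (w : Equiv.Perm (Fin (m + 1))) (b : Fin m → ZMod 2) :
    flagStat w (suffixSum b) = ∑ i : Fin m,
      if b i = 0 then (if w i.succ < w i.castSucc then 2 else 0) else 1 := by
  simp only [flagStat_eq_sum_s15 w (suffixSum_last b), suffixSum_castSucc, add_eq_right]

lemma sum_pow_flagStat {R : Type*} [CommSemiring R] (x : R) (w : Equiv.Perm (Fin (m + 1))) :
    ∑ c : Fin (m + 1) → ZMod 2 with c (Fin.last m) = 0, x ^ flagStat w c
      = (1 + x) ^ m * x ^ des w := by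
  calc _ = ∑ b : Fin m → ZMod 2, ∏ i,
          x ^ (if b i = 0 then (if w i.succ < w i.castSucc then 2 else 0) else 1) := by
        simp only [sum_last_eq_zero_eq_sum_suffixSum, flagStat_suffixSum, prod_pow_eq_pow_sum]
    _ = ∏ i : Fin m, ∑ v : ZMod 2,
          x ^ (if v = 0 then (if w i.succ < w i.castSucc then 2 else 0) else 1) := by
        rw [Fintype.prod_sum]
    _ = ∏ i : Fin m, (1 + x) * x ^ (if w i.succ < w i.castSucc then 1 else 0) := by
        refine prod_congr rfl fun i _ => ?_
        rw [ZMod.sum_univ_two, if_pos rfl, if_neg one_ne_zero]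
        split_ifs <;> ring
    _ = (1 + x) ^ m * x ^ des w := by
        rw [prod_mul_distrib, prod_const, card_univ, Fintype.card_fin, prod_pow_eq_pow_sum,
          des_eq_card, card_filter]

/-- For odd `n = 2k+1`, the flag descent polynomial over signed permutations with last color
`0` factors as `F_{2k+1}^2(x) = (1+x)^{2k} ⬝ A_{2k+1}(x)`. -/
theorem flag_polynomial_factorization_odd_signed (k : ℕ) :
    (∑ w : Equiv.Perm (Fin (2 * k + 1)),
        ∑ c ∈ univ.filter (fun c : Fin (2 * k + 1) → ZMod 2 => c ⟨2 * k, by omega⟩ = 0),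
          (X : Polynomial ℤ) ^ flagStat w c)
      = (1 + X) ^ (2 * k) *
          ∑ w : Equiv.Perm (Fin (2 * k + 1)), (X : Polynomial ℤ) ^ des w := by
  rw [mul_sum]
  exact sum_congr rfl fun w _ => sum_pow_flagStat X w
end
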